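/- Let L be a lattice with a least element, let a ∈ L be an atom of L that is also a neutral element of L, and let x ∈ L. Then x is a cancellable element of L if and only if for all y, z ∈ L with a ≤ y and a ≤ z, the equalities x ⊔ y = x ⊔ z and x ⊓ y = x ⊓ z imply y = z. -/

import Mathlib

/-!
A neutral element is cancellable, so it suffices to show `y ⊔ a = z ⊔ a` and `a ⊓ y = a ⊓ z`.
As `a` is an atom, the latter says `a ≤ y ↔ a ≤ z`. If `a ≤ y` and `a ≰ x`, then `a ⊓ x = ⊥`
and `a ≤ x ⊔ z`, so the median of `a, x, z`, which neutrality turns into `(x ⊓ z) ⊔ (z ⊓ a)`,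
lies above `a` and below `z`. The former is the hypothesis applied to `y ⊔ a` and `z ⊔ a`, whose
meets with `x` agree because a neutral atom satisfies `x ⊓ (y ⊔ a) = (x ⊓ y) ⊔ (x ⊓ a)`.
-/

/-- An element `x` of a lattice is cancellable if `x ⊔ y = x ⊔ z` and `x ⊓ y = x ⊓ z`
imply `y = z`. -/
def IsCancellable {L : Type*} [Lattice L] (x : L) : Prop :=
  ∀ y z : L, x ⊔ y = x ⊔ z → x ⊓ y = x ⊓ z → y = z

/-- An element `a` of a lattice is neutral. -/
def IsNeutral {L : Type*} [Lattice L] (a : L) : Prop :=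
  ∀ y z : L, (a ⊔ y) ⊓ (y ⊔ z) ⊓ (z ⊔ a) = (a ⊓ y) ⊔ (y ⊓ z) ⊔ (z ⊓ a)

theorem IsAtom.inf_eq_inf_of_le_iff_le {L : Type*} [Lattice L] [OrderBot L] {a y z : L}
    (ha : IsAtom a) (h : a ≤ y ↔ a ≤ z) : a ⊓ y = a ⊓ z := by
  by_cases hy : a ≤ y
  · rw [inf_eq_left.2 hy, inf_eq_left.2 (h.1 hy)]
  · rw [disjoint_iff.1 (ha.not_le_iff_disjoint.1 hy),
      disjoint_iff.1 (ha.not_le_iff_disjoint.1 (mt h.2 hy))]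

namespace IsNeutral

variable {L : Type*} [Lattice L] {a x y z : L}

theorem le_of_le_sup_of_inf_le (ha : IsNeutral a) (h₁ : y ≤ z ⊔ a) (h₂ : a ⊓ y ≤ z) :
    y ≤ z :=
  calc y ≤ (a ⊔ y) ⊓ (y ⊔ z) ⊓ (z ⊔ a) := le_inf (le_inf le_sup_right le_sup_left) h₁
    _ = (a ⊓ y) ⊔ (y ⊓ z) ⊔ (z ⊓ a) := ha y z
    _ ≤ z := sup_le (sup_le h₂ inf_le_right) inf_le_left

theorem self_le_of_le_sup_of_inf_le (ha : IsNeutral a) (h₁ : a ≤ x ⊔ z) (h₂ : a ⊓ x ≤ z) :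
    a ≤ z :=
  calc a ≤ (a ⊔ x) ⊓ (x ⊔ z) ⊓ (z ⊔ a) := le_inf (le_inf le_sup_left h₁) le_sup_right
    _ = (a ⊓ x) ⊔ (x ⊓ z) ⊔ (z ⊓ a) := ha x z
    _ ≤ z := sup_le (sup_le h₂ inf_le_right) inf_le_left

theorem isCancellable (ha : IsNeutral a) : IsCancellable a := by
  intro y z hj hm
  apply le_antisymm
  · exact ha.le_of_le_sup_of_inf_le (sup_comm a z ▸ hj ▸ le_sup_right) (hm ▸ inf_le_right)
  · exact ha.le_of_le_sup_of_inf_le (sup_comm a y ▸ hj ▸ le_sup_right) (hm ▸ inf_le_right)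

theorem inf_sup_eq_of_inf_le (ha : IsNeutral a) (h : a ⊓ y ≤ x) :
    x ⊓ (y ⊔ a) = x ⊓ y ⊔ x ⊓ a := by
  refine le_antisymm ?_ le_inf_sup
  calc x ⊓ (y ⊔ a) ≤ (a ⊔ x) ⊓ (x ⊔ y) ⊓ (y ⊔ a) :=
        le_inf (le_inf (inf_le_left.trans le_sup_right) (inf_le_left.trans le_sup_left))
          inf_le_right
    _ = (a ⊓ x) ⊔ (x ⊓ y) ⊔ (y ⊓ a) := ha x y
    _ ≤ x ⊓ y ⊔ x ⊓ a :=
        sup_le (sup_le (inf_comm a x ▸ le_sup_right) le_sup_left)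
          (le_sup_of_le_left (le_inf (inf_comm a y ▸ h) inf_le_left))

variable [OrderBot L]

theorem inf_sup_eq_of_isAtom (hn : IsNeutral a) (ha : IsAtom a) (x y : L) :
    x ⊓ (y ⊔ a) = x ⊓ y ⊔ x ⊓ a := by
  by_cases hy : a ≤ y
  · rw [sup_eq_left.2 hy, sup_eq_left.2 (inf_le_inf_left x hy)]
  · exact hn.inf_sup_eq_of_inf_le ((ha.not_le_iff_disjoint.1 hy).le_bot.trans bot_le)

theorem le_of_le_of_sup_eq_of_inf_eq (hn : IsNeutral a) (ha : IsAtom a)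
    (hj : x ⊔ y = x ⊔ z) (hm : x ⊓ y = x ⊓ z) (hy : a ≤ y) : a ≤ z := by
  by_cases hx : a ≤ x
  · exact (le_inf hx hy).trans (hm ▸ inf_le_right)
  · exact hn.self_le_of_le_sup_of_inf_le (hj ▸ hy.trans le_sup_right)
      ((ha.not_le_iff_disjoint.1 hx).le_bot.trans bot_le)

end IsNeutral

theorem stmt1 {L : Type*} [Lattice L] [OrderBot L] (a x : L)
    (ha_atom : IsAtom a) (ha_neutral : IsNeutral a) :
    IsCancellable x ↔
      ∀ y z : L, a ≤ y → a ≤ z → x ⊔ y = x ⊔ z → x ⊓ y = x ⊓ z → y = z := by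
  refine ⟨fun h y z _ _ ↦ h y z, fun h y z hj hm ↦ ?_⟩
  have hsup : y ⊔ a = z ⊔ a := by
    refine h _ _ le_sup_right le_sup_right (by rw [← sup_assoc, ← sup_assoc, hj]) ?_
    rw [ha_neutral.inf_sup_eq_of_isAtom ha_atom, ha_neutral.inf_sup_eq_of_isAtom ha_atom, hm]
  have hinf : a ⊓ y = a ⊓ z := ha_atom.inf_eq_inf_of_le_iff_le
    ⟨ha_neutral.le_of_le_of_sup_eq_of_inf_eq ha_atom hj hm,
      ha_neutral.le_of_le_of_sup_eq_of_inf_eq ha_atom hj.symm hm.symm⟩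
  exact ha_neutral.isCancellable y z (by rw [sup_comm a y, sup_comm a z, hsup]) hinf
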